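/- arXiv:1409.4006 — 9 statements merged into one kernel-verified Lean document; each statement's English description precedes it below -/
import Mathlib

section
/- For every positive integer n and integers d₁,…,dₙ with dᵢ ≥ 1 and Σᵢ dᵢ ≥ 5, one has 86·c₁³ ≤ c₃, and equality holds if and only if (c₁³/(c₁c₂), c₃/(c₁c₂)) = (1/16, 43/8), i.e. if and only if the Chern ratios are those of a smooth degree 6 hypersurface in ℙ⁴ (n = 1, d₁ = 5). -/
open Finset

/-- `s_j = ∑ i, dᵢ^j`. -/
def sPow (n : ℕ) (d : Fin n → ℝ) (j : ℕ) : ℝ := ∑ i, (d i) ^ j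

/-- `c₁ = 4 - s₁`. -/
def chern1 (n : ℕ) (d : Fin n → ℝ) : ℝ := 4 - sPow n d 1

/-- `c₂ = (s₁² + s₂)/2 - 3(s₁ - 2)`. -/
noncomputable def chern2 (n : ℕ) (d : Fin n → ℝ) : ℝ :=
  (sPow n d 1 ^ 2 + sPow n d 2) / 2 - 3 * (sPow n d 1 - 2)

/-- `c₃ = -(s₁³ + 3s₁s₂ + 2s₃)/6 + (s₁² + s₂) - 3s₁ + 4`. -/
noncomputable def chern3 (n : ℕ) (d : Fin n → ℝ) : ℝ :=
  -(sPow n d 1 ^ 3 + 3 * sPow n d 1 * sPow n d 2 + 2 * sPow n d 3) / 6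
    + (sPow n d 1 ^ 2 + sPow n d 2) - 3 * sPow n d 1 + 4

/-!
Write `c₃ - 86 c₁³` as a polynomial in `s₁, s₂, s₃`:
`(s₁/2 - 1)(s₁² - s₂) + (s₁³ - s₃)/3 + 5 (s₁ - 5)(17 s₁² - 121 s₁ + 220)`.
For nonnegative `dᵢ` the power sums satisfy `s_j ≤ s₁ʲ`, and the quadratic factor has negative
discriminant, so for `s₁ ≥ 5` every summand is nonnegative. Equality forces `s₁ = 5` and
`s₂ = s₁² = 25`, which pins down `c₁ = -1`, `c₂ = 16`, `c₃ = -86`.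
-/

theorem Finset.sum_pow_le_pow_sum_of_nonneg {ι R : Type*} [Semiring R] [PartialOrder R]
    [IsOrderedRing R] {f : ι → R} {s : Finset ι} (hf : ∀ i ∈ s, 0 ≤ f i) {k : ℕ} (hk : k ≠ 0) :
    ∑ i ∈ s, f i ^ k ≤ (∑ i ∈ s, f i) ^ k := by
  obtain ⟨m, rfl⟩ := Nat.exists_eq_succ_of_ne_zero hk
  calc ∑ i ∈ s, f i ^ (m + 1) ≤ ∑ i ∈ s, f i * (∑ j ∈ s, f j) ^ m := by
        refine sum_le_sum fun i hi => ?_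
        rw [pow_succ']
        exact mul_le_mul_of_nonneg_left
          (pow_le_pow_left₀ (hf i hi) (single_le_sum hf hi) m) (hf i hi)
    _ = (∑ i ∈ s, f i) ^ (m + 1) := by rw [← sum_mul, pow_succ']

section ChernNumbers

variable {n : ℕ} {d : Fin n → ℝ}

theorem sPow_le_sPow_one_pow (hd : ∀ i, 0 ≤ d i) {k : ℕ} (hk : k ≠ 0) :
    sPow n d k ≤ sPow n d 1 ^ k := by
  simpa only [sPow, pow_one] using sum_pow_le_pow_sum_of_nonneg (fun i _ => hd i) hk

theorem chern3_sub_mul_chern1_pow_three (n : ℕ) (d : Fin n → ℝ) :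
    chern3 n d - 86 * chern1 n d ^ 3 =
      (sPow n d 1 / 2 - 1) * (sPow n d 1 ^ 2 - sPow n d 2) + (sPow n d 1 ^ 3 - sPow n d 3) / 3 +
        5 * (sPow n d 1 - 5) * (17 * sPow n d 1 ^ 2 - 121 * sPow n d 1 + 220) := by
  simp only [chern1, chern3]
  ring

theorem quadratic_pos (x : ℝ) : 0 < 17 * x ^ 2 - 121 * x + 220 := by
  nlinarith [sq_nonneg (34 * x - 121)]

theorem mul_chern1_pow_three_le_chern3 (hd : ∀ i, 0 ≤ d i) (hs : 5 ≤ sPow n d 1) :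
    86 * chern1 n d ^ 3 ≤ chern3 n d := by
  have h2 := sPow_le_sPow_one_pow hd two_ne_zero
  have h3 := sPow_le_sPow_one_pow hd three_ne_zero
  have hA : 0 ≤ (sPow n d 1 / 2 - 1) * (sPow n d 1 ^ 2 - sPow n d 2) :=
    mul_nonneg (by linarith) (by linarith)
  have hC : 0 ≤ 5 * (sPow n d 1 - 5) * (17 * sPow n d 1 ^ 2 - 121 * sPow n d 1 + 220) :=
    mul_nonneg (by linarith) (quadratic_pos _).le
  linarith [chern3_sub_mul_chern1_pow_three n d]

theorem sPow_eq_of_mul_chern1_pow_three_eq_chern3 (hd : ∀ i, 0 ≤ d i) (hs : 5 ≤ sPow n d 1)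
    (heq : 86 * chern1 n d ^ 3 = chern3 n d) : sPow n d 1 = 5 ∧ sPow n d 2 = 25 := by
  have h2 := sPow_le_sPow_one_pow hd two_ne_zero
  have h3 := sPow_le_sPow_one_pow hd three_ne_zero
  have hq := quadratic_pos (sPow n d 1)
  have hA : 0 ≤ (sPow n d 1 / 2 - 1) * (sPow n d 1 ^ 2 - sPow n d 2) :=
    mul_nonneg (by linarith) (by linarith)
  have hC : 0 ≤ (sPow n d 1 - 5) * (17 * sPow n d 1 ^ 2 - 121 * sPow n d 1 + 220) :=
    mul_nonneg (by linarith) hq.le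
  have hsum := chern3_sub_mul_chern1_pow_three n d
  have hs1 : sPow n d 1 = 5 := by
    have hC0 : (sPow n d 1 - 5) * (17 * sPow n d 1 ^ 2 - 121 * sPow n d 1 + 220) = 0 := by
      linarith
    linarith [(mul_eq_zero.mp hC0).resolve_right hq.ne']
  refine ⟨hs1, ?_⟩
  have hA0 : (sPow n d 1 / 2 - 1) * (sPow n d 1 ^ 2 - sPow n d 2) = 0 := by linarith
  rw [hs1] at hA0
  linarith [(mul_eq_zero.mp hA0).resolve_left (by norm_num)]

end ChernNumbers

theorem mul_pow_three_eq_of_ratios_eq {a b c : ℝ}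
    (h : (a ^ 3 / (a * b), c / (a * b)) = ((1 / 16 : ℝ), (43 / 8 : ℝ))) : 86 * a ^ 3 = c := by
  obtain ⟨h1, h2⟩ := Prod.mk.inj h
  have hab : a * b ≠ 0 := by
    rintro hab
    rw [hab, div_zero] at h1
    norm_num at h1
  rw [div_eq_iff hab] at h1 h2
  linarith

theorem chern_ineq_86c1cube_le_c3_general
    (n : ℕ) (d : Fin n → ℤ) (hd : ∀ i, 1 ≤ d i) (hs : 5 ≤ ∑ i, d i) :
    86 * chern1 n (fun i => (d i : ℝ)) ^ 3 ≤ chern3 n (fun i => (d i : ℝ)) ∧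
    (86 * chern1 n (fun i => (d i : ℝ)) ^ 3 = chern3 n (fun i => (d i : ℝ)) ↔
      (chern1 n (fun i => (d i : ℝ)) ^ 3 /
          (chern1 n (fun i => (d i : ℝ)) * chern2 n (fun i => (d i : ℝ))),
       chern3 n (fun i => (d i : ℝ)) /
          (chern1 n (fun i => (d i : ℝ)) * chern2 n (fun i => (d i : ℝ)))) =
        ((1/16 : ℝ), (43/8 : ℝ))) := by
  have hd₀ : ∀ i, (0 : ℝ) ≤ d i := fun i => by exact_mod_cast (zero_le_one.trans (hd i))
  have hs₁ : (5 : ℝ) ≤ sPow n (fun i => (d i : ℝ)) 1 := by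
    simp only [sPow, pow_one]
    exact_mod_cast hs
  refine ⟨mul_chern1_pow_three_le_chern3 hd₀ hs₁, fun heq => ?_, mul_pow_three_eq_of_ratios_eq⟩
  obtain ⟨h1, h2⟩ := sPow_eq_of_mul_chern1_pow_three_eq_chern3 hd₀ hs₁ heq
  have hc₁ : chern1 n (fun i => (d i : ℝ)) = -1 := by rw [chern1, h1]; norm_num
  have hc₂ : chern2 n (fun i => (d i : ℝ)) = 16 := by rw [chern2, h1, h2]; norm_num
  rw [← heq, hc₁, hc₂]
  norm_num

theorem chern_ineq_86c1cube_le_c3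
    (n : ℕ) (hn : 0 < n) (d : Fin n → ℤ) (hd : ∀ i, 1 ≤ d i) (hs : 5 ≤ ∑ i, d i) :
    86 * chern1 n (fun i => (d i : ℝ)) ^ 3 ≤ chern3 n (fun i => (d i : ℝ)) ∧
    (86 * chern1 n (fun i => (d i : ℝ)) ^ 3 = chern3 n (fun i => (d i : ℝ)) ↔
      (chern1 n (fun i => (d i : ℝ)) ^ 3 /
          (chern1 n (fun i => (d i : ℝ)) * chern2 n (fun i => (d i : ℝ))),
       chern3 n (fun i => (d i : ℝ)) /
          (chern1 n (fun i => (d i : ℝ)) * chern2 n (fun i => (d i : ℝ)))) =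
        ((1/16 : ℝ), (43/8 : ℝ))) :=
  chern_ineq_86c1cube_le_c3_general n d hd hs
end

section
/- For every positive integer n and integers d₁,…,dₙ with dᵢ ≥ 1 and Σᵢ dᵢ ≥ 5, one has the strict inequality c₃ < c₁³/6. -/
open Finset

theorem chern_ineq_c3_lt_c1cube_div_six
    (n : ℕ) (hn : 0 < n) (d : Fin n → ℤ) (hd : ∀ i, 1 ≤ d i) (hs : 5 ≤ ∑ i, d i) :
    chern3 n (fun i => (d i : ℝ)) < chern1 n (fun i => (d i : ℝ)) ^ 3 / 6 := by
  have hd0 : ∀ i, (0:ℝ) ≤ (d i : ℝ) := fun i => by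
    have := hd i; positivity
  have h1 : (5:ℝ) ≤ sPow n (fun i => (d i : ℝ)) 1 := by
    unfold sPow
    simp only [pow_one]
    exact_mod_cast hs
  have h2 : (0:ℝ) ≤ sPow n (fun i => (d i : ℝ)) 2 :=
    Finset.sum_nonneg fun i _ => pow_nonneg (hd0 i) 2
  have h3 : (0:ℝ) ≤ sPow n (fun i => (d i : ℝ)) 3 :=
    Finset.sum_nonneg fun i _ => pow_nonneg (hd0 i) 3
  unfold chern3 chern1
  nlinarith [mul_nonneg h2 (by linarith : (0:ℝ) ≤ sPow n (fun i => (d i : ℝ)) 1 - 2)]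
end

section
/- Let λ, μ, ν ∈ ℝ and let m be a positive integer. For every positive integer n and reals d₁,…,dₙ with dᵢ ≥ 1 and Σᵢ dᵢ = m, there exist a positive integer n′ and a real d ≥ 1 with n′·d = m such that λ·c₁(n;d₁,…,dₙ)³ + μ·c₁(n;d₁,…,dₙ)·c₂(n;d₁,…,dₙ) + ν·c₃(n;d₁,…,dₙ) ≥ λ·c₁(n′;d,…,d)³ + μ·c₁(n′;d,…,d)·c₂(n′;d,…,d) + ν·c₃(n′;d,…,d), where in the second expression all n′ entries equal d. -/
open Finset

/-!
For fixed `s₁ = m` the combination `λ c₁³ + μ c₁ c₂ + ν c₃` is, up to a constant, the linear form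
`B s₂ + C s₃` with `B = μ (4 - m) / 2 + ν (1 - m / 2)` and `C = -ν / 3`. After scaling by `m²` and
`m³`, the equal split of `m` into `k` parts sits at the vertex `(1/k, 1/k²)` of the parabola
`y = x²`. The vertices with `k ≤ K` span a convex polygon bounded below by the chords between
consecutive vertices and above by the chord from `k = 1` to `k = K`, and a linear form on it is
minimised at a vertex.

Rather than placing an arbitrary family in this polygon, insert its entries in increasing order.
By induction the earlier entries can be replaced by an equal split `e, …, e` into `j` parts, where
`j` is at most the number of those entries, without increasing `B s₂ + C s₃`. Then the new entry `a`
satisfies `a ≤ e`, so only two-valued families `(e, …, e, a)` have to be placed in the polygon,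
which is a direct polynomial inequality.
-/

theorem min_le_of_above_chord {β γ u v x y : ℝ} (hux : u ≤ x) (hxv : x ≤ v)
    (hy : 0 ≤ γ * (y - ((u + v) * x - u * v))) :
    min (β * u + γ * u ^ 2) (β * v + γ * v ^ 2) ≤ β * x + γ * y := by
  rcases le_total 0 (β + γ * (u + v)) with h | h
  · exact min_le_of_left_le (by nlinarith [mul_nonneg h (sub_nonneg.2 hux)])
  · exact min_le_of_right_le (by nlinarith [mul_nonneg_of_nonpos_of_nonpos h (sub_nonpos.2 hxv)])

theorem exists_vertex_le_of_mem_polygon (β γ : ℝ) {x y : ℝ} {K : ℕ} (hK : 0 < K)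
    (hKx : (K : ℝ)⁻¹ ≤ x) (hx : x ≤ 1) (hupper : K * y + 1 ≤ (K + 1) * x)
    (hlower : ∀ t : ℕ, 0 < t → (2 * t + 1) * x ≤ t * (t + 1) * y + 1) :
    ∃ k : ℕ, 0 < k ∧ k ≤ K ∧ β * (k : ℝ)⁻¹ + γ * ((k : ℝ)⁻¹) ^ 2 ≤ β * x + γ * y := by
  have hK' : (0 : ℝ) < K := by exact_mod_cast hK
  -- for `γ ≤ 0` compare with the upper edge, for `γ > 0` with the lower edge above `x`
  rcases le_or_gt γ 0 with hγ | hγ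
  · have hchord : y - (((K : ℝ)⁻¹ + 1) * x - (K : ℝ)⁻¹ * 1) ≤ 0 := by
      have : y - (((K : ℝ)⁻¹ + 1) * x - (K : ℝ)⁻¹ * 1) = (K * y + 1 - (K + 1) * x) / K := by
        field_simp; ring
      exact this ▸ div_nonpos_of_nonpos_of_nonneg (by linarith) hK'.le
    rcases min_le_iff.1 (min_le_of_above_chord hKx hx (mul_nonneg_of_nonpos_of_nonpos hγ hchord))
      with h | h
    · exact ⟨K, hK, le_rfl, h⟩
    · exact ⟨1, one_pos, hK, by simpa using h⟩
  · have hx0 : 0 < x := (inv_pos.2 hK').trans_le hKx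
    obtain ⟨t, ht, htx, hxt⟩ : ∃ t : ℕ, t = ⌊x⁻¹⌋₊ ∧ (t : ℝ) ≤ x⁻¹ ∧ x⁻¹ < t + 1 :=
      ⟨_, rfl, Nat.floor_le (inv_nonneg.2 hx0.le), Nat.lt_floor_add_one _⟩
    have ht1 : 0 < t := ht ▸ Nat.floor_pos.2 (one_le_inv₀ hx0 |>.2 hx)
    have htK : t ≤ K := ht ▸ Nat.floor_le_of_le ((inv_le_comm₀ hK' hx0).1 hKx)
    have htR : (0 : ℝ) < t := by exact_mod_cast ht1
    have hvx : x ≤ (t : ℝ)⁻¹ := (le_inv_comm₀ hx0 htR).2 htx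
    have hlow : 0 ≤ y - ((((t : ℝ) + 1)⁻¹ + (t : ℝ)⁻¹) * x - ((t : ℝ) + 1)⁻¹ * (t : ℝ)⁻¹) := by
      have : y - ((((t : ℝ) + 1)⁻¹ + (t : ℝ)⁻¹) * x - ((t : ℝ) + 1)⁻¹ * (t : ℝ)⁻¹)
          = (t * (t + 1) * y + 1 - (2 * t + 1) * x) / (t * (t + 1)) := by
        field_simp; ring
      exact this ▸ div_nonneg (by linarith [hlower t ht1]) (by positivity)
    rcases htK.lt_or_eq with htK | rfl
    · have hux : ((t : ℝ) + 1)⁻¹ ≤ x := (inv_le_comm₀ (by positivity) hx0).2 hxt.le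
      rcases min_le_iff.1 (min_le_of_above_chord (β := β) hux hvx
        (mul_nonneg hγ.le hlow)) with h | h
      · exact ⟨t + 1, t.succ_pos, htK, by push_cast; exact h⟩
      · exact ⟨t, ht1, htK.le, h⟩
    · -- `x = 1/t` is itself a vertex, and the chord inequality at `t` says `y ≥ 1/t²`
      have hxt : x = (t : ℝ)⁻¹ := le_antisymm hvx hKx
      subst hxt
      refine ⟨t, ht1, le_rfl, ?_⟩
      have : ((t : ℝ)⁻¹) ^ 2 ≤ y := by
        have : (((t : ℝ) + 1)⁻¹ + (t : ℝ)⁻¹) * (t : ℝ)⁻¹ - ((t : ℝ) + 1)⁻¹ * (t : ℝ)⁻¹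
            = ((t : ℝ)⁻¹) ^ 2 := by ring
        linarith
      linarith [mul_le_mul_of_nonneg_left this hγ.le]

theorem exists_equal_split_le_of_chords (B C : ℝ) {M S₂ S₃ : ℝ} {K : ℕ} (hK : 0 < K)
    (hM : 0 < M) (hKS : M ^ 2 ≤ K * S₂) (hS : S₂ ≤ M ^ 2)
    (hupper : K * S₃ + M ^ 3 ≤ (K + 1) * M * S₂)
    (hlower : ∀ t : ℕ, 0 < t → (2 * t + 1) * M * S₂ ≤ t * (t + 1) * S₃ + M ^ 3) :
    ∃ k : ℕ, 0 < k ∧ k ≤ K ∧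
      B * (k * (M / k) ^ 2) + C * (k * (M / k) ^ 3) ≤ B * S₂ + C * S₃ := by
  have hK' : (0 : ℝ) < K := by exact_mod_cast hK
  have hx : (K : ℝ)⁻¹ ≤ S₂ / M ^ 2 := by
    rw [le_div_iff₀ (by positivity), inv_mul_le_iff₀ hK']; exact hKS
  have hupper' : K * (S₃ / M ^ 3) + 1 ≤ (K + 1) * (S₂ / M ^ 2) := by
    have : (K + 1) * (S₂ / M ^ 2) - (K * (S₃ / M ^ 3) + 1)
        = ((K + 1) * M * S₂ - (K * S₃ + M ^ 3)) / M ^ 3 := by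
      field_simp
    linarith [div_nonneg (sub_nonneg.2 hupper) (pow_pos hM 3).le]
  have hlower' : ∀ t : ℕ, 0 < t →
      (2 * t + 1) * (S₂ / M ^ 2) ≤ t * (t + 1) * (S₃ / M ^ 3) + 1 := by
    intro t ht
    have : t * (t + 1) * (S₃ / M ^ 3) + 1 - (2 * t + 1) * (S₂ / M ^ 2)
        = (t * (t + 1) * S₃ + M ^ 3 - (2 * t + 1) * M * S₂) / M ^ 3 := by
      field_simp
    linarith [div_nonneg (sub_nonneg.2 (hlower t ht)) (pow_pos hM 3).le]
  obtain ⟨k, hk, hkK, hle⟩ := exists_vertex_le_of_mem_polygon (B * M ^ 2) (C * M ^ 3) hK hx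
    (div_le_one_of_le₀ hS (by positivity)) hupper' hlower'
  refine ⟨k, hk, hkK, ?_⟩
  have hk' : (k : ℝ) ≠ 0 := by positivity
  calc B * (k * (M / k) ^ 2) + C * (k * (M / k) ^ 3)
      = B * M ^ 2 * (k : ℝ)⁻¹ + C * M ^ 3 * ((k : ℝ)⁻¹) ^ 2 := by field_simp
    _ ≤ B * M ^ 2 * (S₂ / M ^ 2) + C * M ^ 3 * (S₃ / M ^ 3) := hle
    _ = B * S₂ + C * S₃ := by field_simp

theorem lower_chord_two_values {j t : ℕ} {e a : ℝ} (ha : 0 ≤ a) (hae : a ≤ e) :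
    (2 * t + 1) * (j * e + a) * (j * e ^ 2 + a ^ 2)
      ≤ t * (t + 1) * (j * e ^ 3 + a ^ 3) + (j * e + a) ^ 3 := by
  set w : ℝ := t - j with hw
  have key : t * (t + 1) * (j * e ^ 3 + a ^ 3) + (j * e + a) ^ 3
      - (2 * t + 1) * (j * e + a) * (j * e ^ 2 + a ^ 2)
      = j * (j - 1) * a * (e - a) ^ 2 + 2 * j * w * ((e - a) ^ 2 * (e + a))
        + (j * e ^ 3 + a ^ 3) * (w * (w - 1)) := by ring
  have hj : (0 : ℝ) ≤ j * (j - 1) := by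
    rcases j with _ | j
    · simp
    · push_cast; nlinarith
  have h₁ : 0 ≤ j * (j - 1) * a * (e - a) ^ 2 := by
    have := mul_nonneg hj ha; positivity
  have hea₀ : 0 ≤ (e - a) ^ 2 * (e + a) := by
    have : 0 ≤ e + a := by linarith
    positivity
  have hS₃ : 0 ≤ (j : ℝ) * e ^ 3 := by have : 0 ≤ e := ha.trans hae; positivity
  rcases le_or_gt j t with h | h
  · have hw₀ : 0 ≤ w := by rw [hw, sub_nonneg]; exact_mod_cast h
    have hww : 0 ≤ w * (w - 1) := by
      obtain ⟨i, rfl⟩ := Nat.exists_eq_add_of_le h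
      rcases i with _ | i
      · simp [hw]
      · rw [hw]; push_cast; nlinarith
    nlinarith [mul_nonneg (mul_nonneg (Nat.cast_nonneg (α := ℝ) j) hw₀) hea₀,
      mul_nonneg (add_nonneg hS₃ (pow_nonneg ha 3)) hww]
  · -- for `t < j` the integrality `w ≤ -1` gives `w (w - 1) ≥ -2 w`, and `(e - a)² (e + a) ≤ e³`
    have hw₁ : w ≤ -1 := by
      rw [hw]; have : (t : ℝ) + 1 ≤ j := by exact_mod_cast h
      linarith
    have hea : (e - a) ^ 2 * (e + a) ≤ e ^ 3 := by nlinarith [mul_nonneg ha (sub_nonneg.2 hae)]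
    nlinarith [mul_nonneg (mul_nonneg (Nat.cast_nonneg (α := ℝ) j) (by linarith : 0 ≤ -w))
      (sub_nonneg.2 hea), mul_nonneg hS₃ (by nlinarith : 0 ≤ w * (w - 1) + 2 * w),
      mul_nonneg (pow_nonneg ha 3) (by nlinarith : 0 ≤ w * (w - 1))]

theorem exists_equal_split_le_two_values (B C : ℝ) {j : ℕ} (hj : 0 < j) {e a : ℝ}
    (ha : 0 ≤ a) (hae : a ≤ e) :
    ∃ k : ℕ, 0 < k ∧ k ≤ j + 1 ∧
      B * (k * ((j * e + a) / k) ^ 2) + C * (k * ((j * e + a) / k) ^ 3)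
        ≤ B * (j * e ^ 2 + a ^ 2) + C * (j * e ^ 3 + a ^ 3) := by
  rcases (ha.trans hae).eq_or_lt with rfl | he
  · obtain rfl : a = 0 := le_antisymm hae ha
    exact ⟨1, one_pos, by omega, by simp⟩
  have hj' : (1 : ℝ) ≤ j := by exact_mod_cast hj
  refine exists_equal_split_le_of_chords B C (K := j + 1) j.succ_pos (by positivity) ?_ ?_ ?_
    fun t _ => lower_chord_two_values ha hae
  · push_cast; nlinarith [mul_nonneg (Nat.cast_nonneg (α := ℝ) j) (sq_nonneg (e - a))]
  · nlinarith [mul_nonneg (Nat.cast_nonneg (α := ℝ) j) (mul_nonneg he.le ha),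
      mul_nonneg (mul_nonneg (Nat.cast_nonneg (α := ℝ) j) (sub_nonneg.2 hj')) (sq_nonneg e)]
  · -- the defect is `j (j - 1) e (e - a)²`
    push_cast
    nlinarith [mul_nonneg (mul_nonneg (mul_nonneg (Nat.cast_nonneg (α := ℝ) j)
      (sub_nonneg.2 hj')) he.le) (sq_nonneg (e - a))]

theorem exists_equal_split_le {ι : Type*} (d : ι → ℝ) (B C : ℝ) (s : Finset ι)
    (hs : s.Nonempty) (hd : ∀ i ∈ s, 0 ≤ d i) :
    ∃ k : ℕ, 0 < k ∧ k ≤ #s ∧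
      B * (k * ((∑ i ∈ s, d i) / k) ^ 2) + C * (k * ((∑ i ∈ s, d i) / k) ^ 3)
        ≤ B * ∑ i ∈ s, d i ^ 2 + C * ∑ i ∈ s, d i ^ 3 := by
  classical
  induction s using Finset.induction_on_min_value d with
  | empty => exact absurd hs not_nonempty_empty
  | insert a s has hmin ih =>
    rcases s.eq_empty_or_nonempty with rfl | hs'
    · exact ⟨1, one_pos, by simp, by simp⟩
    obtain ⟨j, hj, hjs, hle⟩ := ih hs' fun i hi => hd i (mem_insert_of_mem hi)
    have hj' : (0 : ℝ) < j := by exact_mod_cast hj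
    -- `d a` is the smallest value and `j ≤ #s`, so it is at most the part size of the equal split
    have hae : d a ≤ (∑ i ∈ s, d i) / j := by
      rw [le_div_iff₀ hj']
      calc d a * j ≤ d a * #s := by
            gcongr
            exact hd a (mem_insert_self a s)
        _ ≤ ∑ i ∈ s, d i := by
            simpa [mul_comm] using card_nsmul_le_sum s d (d a) hmin
    obtain ⟨k, hk, hkj, hle'⟩ :=
      exists_equal_split_le_two_values B C hj (hd a (mem_insert_self a s)) hae
    refine ⟨k, hk, by rw [card_insert_of_notMem has]; omega, ?_⟩
    have hM : j * ((∑ i ∈ s, d i) / j) + d a = ∑ i ∈ insert a s, d i := by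
      rw [sum_insert has]; field_simp; ring
    rw [← hM, sum_insert has, sum_insert has]
    linarith

theorem sPow_const (k : ℕ) (e : ℝ) (j : ℕ) : sPow k (fun _ => e) j = k * e ^ j := by
  simp [sPow]

theorem chern_combination_sub (lam mu nu : ℝ) {n n' : ℕ} {d : Fin n → ℝ} {d' : Fin n' → ℝ}
    (h : sPow n d 1 = sPow n' d' 1) :
    (lam * chern1 n d ^ 3 + mu * chern1 n d * chern2 n d + nu * chern3 n d)
      - (lam * chern1 n' d' ^ 3 + mu * chern1 n' d' * chern2 n' d' + nu * chern3 n' d')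
      = (mu * (4 - sPow n d 1) / 2 + nu * (1 - sPow n d 1 / 2)) * (sPow n d 2 - sPow n' d' 2)
        - nu / 3 * (sPow n d 3 - sPow n' d' 3) := by
  simp only [chern1, chern2, chern3, h]
  ring

theorem reduce_to_equal_degrees_general
    (lam mu nu : ℝ) (m : ℕ)
    (n : ℕ) (hn : 0 < n) (d : Fin n → ℝ) (hd : ∀ i, 1 ≤ d i)
    (hsum : ∑ i, d i = (m : ℝ)) :
    ∃ (n' : ℕ) (e : ℝ), 0 < n' ∧ 1 ≤ e ∧ (n' : ℝ) * e = (m : ℝ) ∧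
      lam * chern1 n' (fun _ => e) ^ 3
        + mu * chern1 n' (fun _ => e) * chern2 n' (fun _ => e)
        + nu * chern3 n' (fun _ => e) ≤
      lam * chern1 n d ^ 3 + mu * chern1 n d * chern2 n d + nu * chern3 n d := by
  obtain ⟨k, hk, hkn, hle⟩ := exists_equal_split_le d (mu * (4 - m) / 2 + nu * (1 - m / 2))
    (-nu / 3) univ (univ_nonempty_iff.2 ⟨⟨0, hn⟩⟩) fun i _ => zero_le_one.trans (hd i)
  have hk' : (0 : ℝ) < k := by exact_mod_cast hk
  have hnm : (n : ℝ) ≤ m := by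
    simpa [← hsum] using card_nsmul_le_sum univ d 1 fun i _ => hd i
  have hkm : (k : ℝ) * (m / k) = m := by field_simp
  have h₁ : sPow n d 1 = m := by simpa [sPow] using hsum
  refine ⟨k, m / k, hk, ?_, hkm, ?_⟩
  · rw [le_div_iff₀ hk', one_mul]
    exact (by simpa using hkn : (k : ℝ) ≤ n).trans hnm
  · have hs₁ : sPow n d 1 = sPow k (fun _ => (m : ℝ) / k) 1 := by
      rw [sPow_const, pow_one, hkm, h₁]
    rw [← sub_nonneg, chern_combination_sub lam mu nu hs₁, h₁, sPow_const, sPow_const]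
    simp only [sPow]
    rw [hsum] at hle
    linarith

theorem reduce_to_equal_degrees
    (lam mu nu : ℝ) (m : ℕ) (hm : 0 < m)
    (n : ℕ) (hn : 0 < n) (d : Fin n → ℝ) (hd : ∀ i, 1 ≤ d i)
    (hsum : ∑ i, d i = (m : ℝ)) :
    ∃ (n' : ℕ) (e : ℝ), 0 < n' ∧ 1 ≤ e ∧ (n' : ℝ) * e = (m : ℝ) ∧
      lam * chern1 n' (fun _ => e) ^ 3
        + mu * chern1 n' (fun _ => e) * chern2 n' (fun _ => e)
        + nu * chern3 n' (fun _ => e) ≤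
      lam * chern1 n d ^ 3 + mu * chern1 n d * chern2 n d + nu * chern3 n d :=
  reduce_to_equal_degrees_general lam mu nu m n hn d hd hsum
end

section
/- Let n be a positive integer, S ≥ 0 a real number, and λ, μ ∈ ℝ. There exists a natural number k with 0 ≤ k < n such that for all nonnegative reals d₁,…,dₙ with Σᵢ dᵢ = S, one has λ·Σᵢ dᵢ² + μ·Σᵢ dᵢ³ ≥ λ·(n-k)·(S/(n-k))² + μ·(n-k)·(S/(n-k))³; that is, the function λs₂ + μs₃ on the simplex {d ∈ ℝⁿ : dᵢ ≥ 0, Σdᵢ = S} attains its minimum at a point with k coordinates equal to 0 and the remaining n-k coordinates equal to S/(n-k). -/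
/-!
Let `f t = λ t² + μ t³` and `G d = ∑ f (dᵢ)`. By compactness `G` attains its minimum on the
simplex, and among the minimizers we take one, `w`, with the fewest nonzero coordinates.
For two positive coordinates `x, y` of `w` put `c = 2λ + 3μ(x + y)`. Merging them into
`(x + y, 0)` changes `G` by `x y c`; since the merged point has smaller support, minimality forces
`c > 0`. Replacing them by their mean changes `G` by `-(x - y)² c / 4`, which forces `x = y`.
Hence the nonzero coordinates of `w` all equal `S / m`, where `m` is their number.
-/

open Finset Function

def sumSimplex (ι : Type*) [Fintype ι] (S : ℝ) : Set (ι → ℝ) :=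
  {d | (∀ i, 0 ≤ d i) ∧ ∑ i, d i = S}

section Simplex

variable {ι : Type*} [Fintype ι]

theorem isCompact_sumSimplex (S : ℝ) : IsCompact (sumSimplex ι S) := by
  refine (isCompact_Icc (a := 0) (b := fun _ => S)).of_isClosed_subset ?_ ?_
  · refine IsClosed.inter ?_ (isClosed_eq (by fun_prop) continuous_const)
    show IsClosed {d : ι → ℝ | ∀ i, 0 ≤ d i}
    rw [Set.ofPred_forall]
    exact isClosed_iInter fun i => isClosed_le continuous_const (continuous_apply i)
  · rintro d ⟨hd, rfl⟩
    exact ⟨hd, fun i => single_le_sum (fun k _ => hd k) (mem_univ i)⟩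

theorem sumSimplex_nonempty [Nonempty ι] {S : ℝ} (hS : 0 ≤ S) : (sumSimplex ι S).Nonempty := by
  classical
  inhabit ι
  exact ⟨Pi.single default S, (Pi.single_nonneg.2 hS : (0 : ι → ℝ) ≤ _), by simp⟩

theorem sum_apply_update_update [DecidableEq ι] {α M : Type*} [AddCommGroup M] (f : α → M)
    (d : ι → α) {i j : ι} (hij : i ≠ j) (a b : α) :
    ∑ k, f (update (update d i a) j b k) = ∑ k, f (d k) - f (d i) - f (d j) + f a + f b := by
  have sum_apply_update : ∀ (e : ι → α) (l : ι) (c : α),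
      ∑ k, f (update e l c k) = ∑ k, f (e k) - f (e l) + f c := by
    intro e l c
    simp only [← comp_apply (f := f), comp_update]
    rw [sum_update_of_mem (mem_univ l), sum_eq_add_sum_sdiff_singleton_of_mem (mem_univ l)]
    simp only [comp_apply]
    abel
  rw [sum_apply_update, sum_apply_update, update_of_ne hij.symm]
  abel

theorem update_update_mem_sumSimplex [DecidableEq ι] {S : ℝ} {w : ι → ℝ}
    (hw : w ∈ sumSimplex ι S) {i j : ι} (hij : i ≠ j) {a b : ℝ} (ha : 0 ≤ a) (hb : 0 ≤ b)
    (hab : a + b = w i + w j) : update (update w i a) j b ∈ sumSimplex ι S := by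
  refine ⟨fun k => ?_, ?_⟩
  · rcases eq_or_ne k j with rfl | hkj
    · simpa using hb
    rw [update_of_ne hkj]
    rcases eq_or_ne k i with rfl | hki
    · simpa using ha
    rw [update_of_ne hki]
    exact hw.1 k
  · have hsum := sum_apply_update_update id w hij a b
    simp only [id] at hsum
    rw [hsum, hw.2]
    linarith

theorem card_support_update_update_zero_lt [DecidableEq ι] {w : ι → ℝ} {i j : ι} (hij : i ≠ j)
    (hi : w i ≠ 0) (hj : w j ≠ 0) (a : ℝ) :
    #{k | update (update w i a) j 0 k ≠ 0} < #{k | w k ≠ 0} := by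
  refine card_lt_card ((ssubset_iff_of_subset fun k hk => ?_).2 ⟨j, by simpa using hj, by simp⟩)
  simp only [mem_filter, mem_univ, true_and] at hk ⊢
  rcases eq_or_ne k j with rfl | hkj
  · simp at hk
  rw [update_of_ne hkj] at hk
  rcases eq_or_ne k i with rfl | hki
  · exact hi
  rwa [update_of_ne hki] at hk

theorem sum_eq_card_support_mul_of_forall_eq {S : ℝ} {w : ι → ℝ} (hw : w ∈ sumSimplex ι S)
    (f : ℝ → ℝ) (hf : f 0 = 0) {i₀ : ι} (hi₀ : w i₀ ≠ 0)
    (heq : ∀ i, w i ≠ 0 → w i = w i₀) :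
    ∑ i, f (w i) = #{i | w i ≠ 0} * f (S / #{i | w i ≠ 0}) := by
  set T : Finset ι := {i | w i ≠ 0}
  have hsum_T : ∀ g : ℝ → ℝ, g 0 = 0 → ∑ i, g (w i) = #T * g (w i₀) := by
    intro g hg
    rw [← sum_filter_of_ne (p := fun i => w i ≠ 0) fun i _ hgi hwi => hgi (by rw [hwi, hg]),
      sum_congr rfl fun i hi => by rw [heq i (mem_filter.1 hi).2], sum_const, nsmul_eq_mul]
  have hT : (#T : ℝ) ≠ 0 := Nat.cast_ne_zero.2 (card_ne_zero.2 ⟨i₀, by simpa [T] using hi₀⟩)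
  have hw₀ : w i₀ = S / #T := by
    have hS := hsum_T id rfl
    simp only [id, hw.2] at hS
    rw [eq_div_iff hT, hS, mul_comm]
  rw [hsum_T f hf, hw₀]

end Simplex

section QuadCubic

variable (lam mu : ℝ)

def quadCubic (t : ℝ) : ℝ := lam * t ^ 2 + mu * t ^ 3

theorem quadCubic_add (x y : ℝ) :
    quadCubic lam mu (x + y) + quadCubic lam mu 0 =
      quadCubic lam mu x + quadCubic lam mu y + x * y * (2 * lam + 3 * mu * (x + y)) := by
  unfold quadCubic; ring

theorem quadCubic_midpoint (x y : ℝ) :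
    quadCubic lam mu ((x + y) / 2) + quadCubic lam mu ((x + y) / 2) =
      quadCubic lam mu x + quadCubic lam mu y - (x - y) ^ 2 * (2 * lam + 3 * mu * (x + y)) / 4 := by
  unfold quadCubic; ring

variable {ι : Type*} [Fintype ι]

theorem eq_of_minimalFor_isMinOn_sum_quadCubic [DecidableEq ι] {S : ℝ} {w : ι → ℝ}
    (hw : MinimalFor (fun d => d ∈ sumSimplex ι S ∧
      IsMinOn (fun d => ∑ i, quadCubic lam mu (d i)) (sumSimplex ι S) d)
      (fun d => #{i | d i ≠ 0}) w)
    {i j : ι} (hi : 0 < w i) (hj : 0 < w j) : w i = w j := by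
  rcases eq_or_ne i j with rfl | hij
  · rfl
  obtain ⟨⟨hwA, hwmin⟩, hwsupp⟩ := hw
  set G : (ι → ℝ) → ℝ := fun d => ∑ i, quadCubic lam mu (d i)
  set c := 2 * lam + 3 * mu * (w i + w j)
  have hG : ∀ a b, G (update (update w i a) j b) =
      G w - quadCubic lam mu (w i) - quadCubic lam mu (w j) + quadCubic lam mu a +
        quadCubic lam mu b :=
    fun a b => sum_apply_update_update _ w hij a b
  have hc : 0 < c := by
    by_contra! hc
    set merged := update (update w i (w i + w j)) j 0
    have hmerged : merged ∈ sumSimplex ι S :=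
      update_update_mem_sumSimplex hwA hij (by positivity) le_rfl (add_zero _)
    have hle : G merged ≤ G w := by
      have := quadCubic_add lam mu (w i) (w j)
      nlinarith [hG (w i + w j) 0, mul_pos hi hj]
    have hlt := card_support_update_update_zero_lt hij hi.ne' hj.ne' (w i + w j)
    exact (hwsupp ⟨hmerged, fun d hd => hle.trans (hwmin hd)⟩ hlt.le).not_gt hlt
  have hbal := hwmin (update_update_mem_sumSimplex hwA hij (a := (w i + w j) / 2)
    (b := (w i + w j) / 2) (by positivity) (by positivity) (by ring))
  have hmid := quadCubic_midpoint lam mu (w i) (w j)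
  have hsq : (w i - w j) ^ 2 * c ≤ 0 := by
    simp only [Set.mem_ofPred_eq, G] at hbal
    nlinarith [hG ((w i + w j) / 2) ((w i + w j) / 2)]
  exact sub_eq_zero.1 <| sq_eq_zero_iff.1 <|
    (nonpos_of_mul_nonpos_left hsq hc).antisymm (sq_nonneg _)

theorem exists_card_mul_quadCubic_le [Nonempty ι] {S : ℝ} (hS : 0 ≤ S) :
    ∃ m : ℕ, 0 < m ∧ m ≤ Fintype.card ι ∧ ∀ d ∈ sumSimplex ι S,
      m * quadCubic lam mu (S / m) ≤ ∑ i, quadCubic lam mu (d i) := by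
  classical
  have hcont : Continuous fun d : ι → ℝ => ∑ i, quadCubic lam mu (d i) := by
    unfold quadCubic; fun_prop
  have hminimizer : ∃ d, d ∈ sumSimplex ι S ∧
      IsMinOn (fun d => ∑ i, quadCubic lam mu (d i)) (sumSimplex ι S) d :=
    (isCompact_sumSimplex S).exists_isMinOn (sumSimplex_nonempty hS) hcont.continuousOn
  obtain ⟨w, hw⟩ := exists_minimalFor_of_wellFoundedLT _ (fun d : ι → ℝ => #{i | d i ≠ 0})
    hminimizer
  obtain ⟨hwA, hwmin⟩ := hw.prop
  by_cases hsupp : ∃ i₀, w i₀ ≠ 0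
  · obtain ⟨i₀, hi₀⟩ := hsupp
    have hpos : ∀ i, w i ≠ 0 → 0 < w i := fun i hi => (hwA.1 i).lt_of_ne' hi
    refine ⟨#{i | w i ≠ 0}, card_pos.2 ⟨i₀, by simpa using hi₀⟩, card_le_univ _, fun d hd => ?_⟩
    rw [← sum_eq_card_support_mul_of_forall_eq hwA _ (by simp [quadCubic]) hi₀
      fun i hi => eq_of_minimalFor_isMinOn_sum_quadCubic lam mu hw (hpos i hi) (hpos i₀ hi₀)]
    exact hwmin hd
  · push Not at hsupp
    have hS0 : S = 0 := by simp [← hwA.2, hsupp]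
    refine ⟨_, Fintype.card_pos, le_rfl, fun d hd => ?_⟩
    simpa [hS0, hsupp, quadCubic] using hwmin hd

end QuadCubic

theorem min_of_power_sums_on_simplex
    (n : ℕ) (hn : 0 < n) (S : ℝ) (hS : 0 ≤ S) (lam mu : ℝ) :
    ∃ k : ℕ, k < n ∧ ∀ d : Fin n → ℝ, (∀ i, 0 ≤ d i) → ∑ i, d i = S →
      lam * ((n : ℝ) - k) * (S / ((n : ℝ) - k)) ^ 2
        + mu * ((n : ℝ) - k) * (S / ((n : ℝ) - k)) ^ 3 ≤
      lam * ∑ i, (d i) ^ 2 + mu * ∑ i, (d i) ^ 3 := by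
  have : Nonempty (Fin n) := ⟨⟨0, hn⟩⟩
  obtain ⟨m, hm, hmn, hmin⟩ := exists_card_mul_quadCubic_le lam mu (ι := Fin n) hS
  rw [Fintype.card_fin] at hmn
  refine ⟨n - m, by omega, fun d hd hsum => ?_⟩
  have hnm : (n : ℝ) - ((n - m : ℕ) : ℝ) = m := by rw [Nat.cast_sub hmn]; ring
  have hd_le := hmin d ⟨hd, hsum⟩
  simp only [quadCubic, sum_add_distrib, ← mul_sum] at hd_le
  rw [hnm]
  linarith
end

section
/- For every positive integer n and reals d₁,…,dₙ with dᵢ ≥ 1, if s₁ = Σᵢ dᵢ ≥ 10 then (4 - s₁)²/((s₁² + s₂)/2 - 3(s₁ - 2)) > 4/9, where s₂ = Σᵢ dᵢ². In particular, any Chern-ratio point with x-coordinate c₁³/(c₁c₂) ≤ 4/9 must have s₁ ≤ 9. -/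
/-!
For `dᵢ ≥ 0` we have `s₂ ≤ s₁²`, so the denominator lies between `(s₁ - 3)²/2 + 3/2 > 0` and
`s₁² - 3s₁ + 6`. Hence it suffices that `9(s₁ - 4)² > 4(s₁² - 3s₁ + 6)`, and the difference of the
two sides is `5((s₁ - 10)(s₁ - 2) + 4)`, which is positive once `s₁ ≥ 10`.
-/

open Finset

lemma sq_add_div_two_sub_three_mul_pos {s₁ s₂ : ℝ} (hs₂ : 0 ≤ s₂) : 0 < (s₁ ^ 2 + s₂) / 2 - 3 * (s₁ - 2) := by
  nlinarith [sq_nonneg (s₁ - 3)]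

lemma four_ninths_lt_of_ten_le_of_le_sq {s₁ s₂ : ℝ} (hs₁ : 10 ≤ s₁) (hs₂ : 0 ≤ s₂) (hle : s₂ ≤ s₁ ^ 2) :
    (4 / 9 : ℝ) < (4 - s₁) ^ 2 / ((s₁ ^ 2 + s₂) / 2 - 3 * (s₁ - 2)) := by
  rw [div_lt_div_iff₀ (by norm_num) (sq_add_div_two_sub_three_mul_pos hs₂)]
  nlinarith [mul_nonneg (sub_nonneg.2 hs₁) (by linarith : (0 : ℝ) ≤ s₁ - 2)]

theorem xCoordinate_gt_four_ninths_of_large_degree_general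
    (n : ℕ) (d : Fin n → ℝ) (hd : ∀ i, 1 ≤ d i)
    (hs : 10 ≤ ∑ i, d i) :
    (4/9 : ℝ) < (4 - ∑ i, d i) ^ 2 /
      (((∑ i, d i) ^ 2 + ∑ i, (d i) ^ 2) / 2 - 3 * ((∑ i, d i) - 2)) :=
  four_ninths_lt_of_ten_le_of_le_sq hs (sum_nonneg fun i _ => sq_nonneg (d i))
    (sum_sq_le_sq_sum_of_nonneg fun i _ => zero_le_one.trans (hd i))

theorem xCoordinate_gt_four_ninths_of_large_degree
    (n : ℕ) (hn : 0 < n) (d : Fin n → ℝ) (hd : ∀ i, 1 ≤ d i)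
    (hs : 10 ≤ ∑ i, d i) :
    (4/9 : ℝ) < (4 - ∑ i, d i) ^ 2 /
      (((∑ i, d i) ^ 2 + ∑ i, (d i) ^ 2) / 2 - 3 * ((∑ i, d i) - 2)) :=
  xCoordinate_gt_four_ninths_of_large_degree_general n d hd hs
end

section
/- For every integer m ≥ 6, every positive integer n, and all integers d₁,…,dₙ with dᵢ ≥ 1 and Σᵢ dᵢ ≥ 5, one has kₘ·c₁³ + bₘ·c₁·c₂ - c₃ ≥ 0, where kₘ = (-28m + m² + 4m³ - m⁴)/((m-4)(m-3)(3m² - 5m - 20)) and bₘ = (-120 + 254m + 3m² - 50m³ + 9m⁴)/(3(m-4)(m-3)(3m² - 5m - 20)); i.e. every Chern-ratio point (c₁³/(c₁c₂), c₃/(c₁c₂)) lies on or above the line y = kₘx + bₘ. -/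
open Finset

/-- The slope `kₘ` of the line through `Q(m;1,…,1)` and `Q(m+1;1,…,1)` for `m ≥ 6`. -/
noncomputable def kGen (m : ℕ) : ℝ :=
  (-28 * (m : ℝ) + (m : ℝ) ^ 2 + 4 * (m : ℝ) ^ 3 - (m : ℝ) ^ 4) /
    (((m : ℝ) - 4) * ((m : ℝ) - 3) * (3 * (m : ℝ) ^ 2 - 5 * (m : ℝ) - 20))

/-- The intercept `bₘ` of the line through `Q(m;1,…,1)` and `Q(m+1;1,…,1)` for `m ≥ 6`. -/
noncomputable def bGen (m : ℕ) : ℝ :=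
  (-120 + 254 * (m : ℝ) + 3 * (m : ℝ) ^ 2 - 50 * (m : ℝ) ^ 3 + 9 * (m : ℝ) ^ 4) /
    (3 * ((m : ℝ) - 4) * ((m : ℝ) - 3) * (3 * (m : ℝ) ^ 2 - 5 * (m : ℝ) - 20))


/-!
Put `p = ∑ dᵢ(dᵢ - 1)` and `q = ∑ dᵢ(dᵢ - 1)(dᵢ - 2)`. After clearing the denominator `D` of `kₘ`
and `bₘ`, the inequality reads `A(s₁) + L(s₁) p + D q ≥ 0` (`gapPoly`), where `A(s)` is the left
side at `d = (1, …, 1)`, `n = s`; it vanishes at `s = m` and `s = m + 1` because the line passes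
through `Q(m;1,…,1)` and `Q(m+1;1,…,1)`. As the `dᵢ` are integers, `q ≥ 0` and `s₁` avoids
`(m, m + 1) ∪ (m + 1, m + 2)`, so `A(s₁) ≥ 0`. If `L(s₁) ≥ 0` we are done. Otherwise `s₁ ≥ m + 2`,
and Cauchy–Schwarz `p² ≤ s₁ (p + q)` bounds the expression below by a quadratic in `p` with
nonpositive discriminant.
-/

def lineDenom (m : ℝ) : ℝ := (m - 4) * (m - 3) * (3 * m ^ 2 - 5 * m - 20)

def onesGap (m s : ℝ) : ℝ :=
  (s - m) * (s - m - 1) * ((21 * m ^ 2 - 3 * m - 60) * s - (12 * m ^ 2 + 108 * m + 240))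

def pairCoeff (m s : ℝ) : ℝ :=
  18 * m ^ 4 - 100 * m ^ 3 + 6 * m ^ 2 + 508 * m - 240 - (14 * m ^ 3 - 75 * m ^ 2 + 7 * m + 300) * s

def gapPoly (m s p q : ℝ) : ℝ := onesGap m s + pairCoeff m s * p + lineDenom m * q

lemma lineDenom_pos {m : ℝ} (hm : 4 < m) : 0 < lineDenom m := by
  have : 0 < 3 * m ^ 2 - 5 * m - 20 := by nlinarith
  have : 0 < m - 4 := by linarith
  have : 0 < m - 3 := by linarith
  unfold lineDenom
  positivity

lemma onesGap_nonneg {m s : ℝ} (hm : 4 ≤ m) (hs : 5 ≤ s) (hint : s ≤ m ∨ m + 1 ≤ s) :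
    0 ≤ onesGap m s := by
  have hroots : 0 ≤ (s - m) * (s - m - 1) := by
    rcases hint with h | h <;> nlinarith
  have hlin : 0 ≤ (21 * m ^ 2 - 3 * m - 60) * s - (12 * m ^ 2 + 108 * m + 240) := by
    nlinarith [mul_le_mul_of_nonneg_left hs (show 0 ≤ 21 * m ^ 2 - 3 * m - 60 by nlinarith)]
  exact mul_nonneg hroots hlin

lemma pairCoeff_pos {m s : ℝ} (hm : 6 ≤ m) (hs : s ≤ m + 1) : 0 < pairCoeff m s := by
  obtain ⟨v, hv, rfl⟩ : ∃ v, 0 ≤ v ∧ m = v + 6 := ⟨m - 6, by linarith, by ring⟩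
  have hslope : 0 ≤ 14 * (v + 6) ^ 3 - 75 * (v + 6) ^ 2 + 7 * (v + 6) + 300 := by
    ring_nf; positivity
  have hmono := mul_le_mul_of_nonneg_left hs hslope
  have hend : 0 < pairCoeff (v + 6) (v + 6 + 1) := by
    unfold pairCoeff; ring_nf; positivity
  unfold pairCoeff at *
  linarith

lemma sq_pairCoeff_sub_lineDenom_le {m s : ℝ} (hm : 6 ≤ m) (hs : m + 2 ≤ s)
    (hL : pairCoeff m s < 0) :
    s * (pairCoeff m s - lineDenom m) ^ 2 ≤ 4 * lineDenom m * onesGap m s := by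
  obtain ⟨v, hv, rfl⟩ : ∃ v, 0 ≤ v ∧ m = v + 6 := ⟨m - 6, by linarith, by ring⟩
  obtain ⟨u, hu, rfl⟩ : ∃ u, 0 ≤ u ∧ s = u + v + 8 := ⟨s - v - 8, by linarith, by ring⟩
  -- Certificate: this is a polynomial in `u = s - m - 2` and `v = m - 6` with nonnegative
  -- coefficients; the multiple of `pairCoeff` cancels the terms `-v⁹ - 2v⁸` of the discriminant.
  have hcert : 0 ≤ 4 * (4 * lineDenom (v + 6) * onesGap (v + 6) (u + v + 8)
      - (u + v + 8) * (pairCoeff (v + 6) (u + v + 8) - lineDenom (v + 6)) ^ 2)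
      + v ^ 5 * pairCoeff (v + 6) (u + v + 8) := by
    unfold lineDenom onesGap pairCoeff; ring_nf; positivity
  nlinarith [mul_nonpos_of_nonneg_of_nonpos (pow_nonneg hv 5) hL.le]

lemma add_mul_add_mul_nonneg_of_sq_le {D s A L p q : ℝ} (hD : 0 < D) (hs : 0 < s)
    (hpq : p ^ 2 ≤ s * (p + q)) (hdisc : s * (L - D) ^ 2 ≤ 4 * D * A) :
    0 ≤ A + L * p + D * q := by
  -- `4Ds (A + Lp + Dq) ≥ (2Dp + s (L - D))² + s (4DA - s (L - D)²)`
  have h : 0 ≤ 4 * D * s * (A + L * p + D * q) := by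
    nlinarith [sq_nonneg (2 * D * p + s * (L - D)),
      mul_le_mul_of_nonneg_left hpq (by positivity : 0 ≤ 4 * D ^ 2)]
  exact nonneg_of_mul_nonneg_right h (by positivity)

lemma gapPoly_nonneg {m s p q : ℝ} (hm : 6 ≤ m) (hs : 5 ≤ s) (hp : 0 ≤ p) (hq : 0 ≤ q)
    (hpq : p ^ 2 ≤ s * (p + q)) (hint : s ≤ m ∨ s = m + 1 ∨ m + 2 ≤ s) :
    0 ≤ gapPoly m s p q := by
  have hD := lineDenom_pos (by linarith : (4 : ℝ) < m)
  rcases le_or_gt 0 (pairCoeff m s) with hL | hL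
  · have hA : 0 ≤ onesGap m s := onesGap_nonneg (by linarith) hs <| by
      rcases hint with h | h | h
      exacts [.inl h, .inr h.ge, .inr (by linarith)]
    unfold gapPoly
    positivity
  · have hs2 : m + 2 ≤ s := by
      rcases hint with h | h | h
      · linarith [pairCoeff_pos hm (by linarith : s ≤ m + 1)]
      · linarith [pairCoeff_pos hm h.le]
      · exact h
    exact add_mul_add_mul_nonneg_of_sq_le hD (by linarith) hpq
      (sq_pairCoeff_sub_lineDenom_le hm hs2 hL)

lemma Int.mul_sub_one_mul_sub_two_nonneg {k : ℤ} (hk : 0 ≤ k) : 0 ≤ k * (k - 1) * (k - 2) := by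
  rcases le_or_gt k 1 with h | h
  · interval_cases k <;> norm_num
  · exact mul_nonneg (mul_nonneg hk (by omega)) (by omega)

section PowerSums

variable {n : ℕ}

lemma sPow_two_sub_sPow_one (x : Fin n → ℝ) :
    sPow n x 2 - sPow n x 1 = ∑ i, x i * (x i - 1) := by
  simp only [sPow, ← sum_sub_distrib]
  congr! 1 with i
  ring

lemma sPow_three_sub_sPow_two_add_sPow_one (x : Fin n → ℝ) :
    sPow n x 3 - 3 * sPow n x 2 + 2 * sPow n x 1 = ∑ i, x i * (x i - 1) * (x i - 2) := by
  simp only [sPow, mul_sum, ← sum_sub_distrib, ← sum_add_distrib]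
  congr! 1 with i
  ring

lemma sq_sum_mul_sub_one_le (x : Fin n → ℝ) (hx : ∀ i, 0 ≤ x i) :
    (∑ i, x i * (x i - 1)) ^ 2 ≤ (∑ i, x i) * ∑ i, x i * (x i - 1) ^ 2 :=
  sum_sq_le_sum_mul_sum_of_sq_le_mul _ (fun i _ => hx i)
    (fun i _ => mul_nonneg (hx i) (sq_nonneg _)) (fun i _ => le_of_eq (by ring))

lemma three_mul_lineDenom_mul_eq_gapPoly (m : ℕ) (hD : lineDenom m ≠ 0) (x : Fin n → ℝ) :
    3 * lineDenom m * (kGen m * chern1 n x ^ 3 + bGen m * (chern1 n x * chern2 n x) - chern3 n x)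
      = gapPoly m (sPow n x 1) (sPow n x 2 - sPow n x 1)
          (sPow n x 3 - 3 * sPow n x 2 + 2 * sPow n x 1) := by
  have hk : kGen m * lineDenom m = -28 * m + m ^ 2 + 4 * m ^ 3 - m ^ 4 := by
    unfold kGen
    exact div_mul_cancel₀ _ hD
  have hb : 3 * bGen m * lineDenom m = -120 + 254 * m + 3 * m ^ 2 - 50 * m ^ 3 + 9 * m ^ 4 := by
    rw [show bGen m = (-120 + 254 * m + 3 * m ^ 2 - 50 * m ^ 3 + 9 * m ^ 4) / (3 * lineDenom m) by
      unfold bGen lineDenom; ring]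
    field_simp
  unfold gapPoly chern1 chern2 chern3 onesGap pairCoeff lineDenom at *
  linear_combination (3 * (4 - sPow n x 1) ^ 3) * hk
    + ((4 - sPow n x 1) * ((sPow n x 1 ^ 2 + sPow n x 2) / 2 - 3 * (sPow n x 1 - 2))) * hb

end PowerSums

theorem above_line_pm_pmplus1_general
    (m : ℕ) (hm : 6 ≤ m)
    (n : ℕ) (d : Fin n → ℤ) (hd : ∀ i, 1 ≤ d i) (hs : 5 ≤ ∑ i, d i) :
    0 ≤ kGen m * chern1 n (fun i => (d i : ℝ)) ^ 3
        + bGen m * (chern1 n (fun i => (d i : ℝ)) * chern2 n (fun i => (d i : ℝ)))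
        - chern3 n (fun i => (d i : ℝ)) := by
  have hx : ∀ i, (1 : ℝ) ≤ d i := fun i => by exact_mod_cast hd i
  have hq : 0 ≤ ∑ i, (d i : ℝ) * (d i - 1) * (d i - 2) := sum_nonneg fun i _ => by
    exact_mod_cast Int.mul_sub_one_mul_sub_two_nonneg (by linarith [hd i] : 0 ≤ d i)
  set x : Fin n → ℝ := fun i => (d i : ℝ)
  have hsum : sPow n x 1 = ((∑ i, d i : ℤ) : ℝ) := by simp [sPow, x]
  have hint : ∑ i, d i ≤ m ∨ ∑ i, d i = m + 1 ∨ m + 2 ≤ ∑ i, d i := by omega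
  have hp : 0 ≤ ∑ i, x i * (x i - 1) :=
    sum_nonneg fun i _ => mul_nonneg (by linarith [hx i]) (by linarith [hx i])
  have hpq : (∑ i, x i * (x i - 1)) ^ 2
      ≤ sPow n x 1 * (∑ i, x i * (x i - 1) + ∑ i, x i * (x i - 1) * (x i - 2)) := by
    convert sq_sum_mul_sub_one_le x (fun i => by linarith [hx i]) using 2
    · simp [sPow]
    · rw [← sum_add_distrib]
      congr! 1 with i
      ring
  have hD := lineDenom_pos (show (4 : ℝ) < m by exact_mod_cast (by omega : 4 < m))
  have key := gapPoly_nonneg (m := m) (by exact_mod_cast hm) (by rw [hsum]; exact_mod_cast hs)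
    hp hq hpq (by rw [hsum]; exact_mod_cast hint)
  rw [← sPow_two_sub_sPow_one, ← sPow_three_sub_sPow_two_add_sPow_one,
    ← three_mul_lineDenom_mul_eq_gapPoly m hD.ne'] at key
  exact nonneg_of_mul_nonneg_right key (by positivity)

theorem above_line_pm_pmplus1
    (m : ℕ) (hm : 6 ≤ m)
    (n : ℕ) (hn : 0 < n) (d : Fin n → ℤ) (hd : ∀ i, 1 ≤ d i) (hs : 5 ≤ ∑ i, d i) :
    0 ≤ kGen m * chern1 n (fun i => (d i : ℝ)) ^ 3
        + bGen m * (chern1 n (fun i => (d i : ℝ)) * chern2 n (fun i => (d i : ℝ)))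
        - chern3 n (fun i => (d i : ℝ)) :=
  above_line_pm_pmplus1_general m hm n d hd hs
end

section
/- For every positive integer n and integers d₁,…,dₙ with dᵢ ≥ 1 and Σᵢ dᵢ ≥ 5, one has 3c₃ + c₁³ - 3c₁·c₂ ≤ 0; equivalently, the Chern-ratio point (c₁³/(c₁c₂), c₃/(c₁c₂)) lies on or above the limit line y = -x/3 + 1. -/
open Finset

theorem above_limit_line
    (n : ℕ) (hn : 0 < n) (d : Fin n → ℤ) (hd : ∀ i, 1 ≤ d i) (hs : 5 ≤ ∑ i, d i) :
    3 * chern3 n (fun i => (d i : ℝ)) + chern1 n (fun i => (d i : ℝ)) ^ 3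
      - 3 * (chern1 n (fun i => (d i : ℝ)) * chern2 n (fun i => (d i : ℝ))) ≤ 0 := by
  set D : Fin n → ℝ := fun i => (d i : ℝ) with hD
  have key : 3 * chern3 n D + chern1 n D ^ 3 - 3 * (chern1 n D * chern2 n D)
      = 4 - 3 * sPow n D 1 - 3 * sPow n D 2 - sPow n D 3 := by
    unfold chern1 chern2 chern3; ring
  have hs1 : (5 : ℝ) ≤ sPow n D 1 := by
    have : (5 : ℝ) ≤ ((∑ i, d i : ℤ) : ℝ) := by exact_mod_cast hs
    simpa [sPow, hD] using this
  have hs2 : (0 : ℝ) ≤ sPow n D 2 := by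
    apply Finset.sum_nonneg; intro i _; positivity
  have hs3 : (0 : ℝ) ≤ sPow n D 3 := by
    apply Finset.sum_nonneg; intro i _
    have : (1 : ℝ) ≤ D i := by simp only [hD]; exact_mod_cast hd i
    positivity
  rw [key]; linarith
end

section
/- For every positive integer n and integers d₁,…,dₙ with dᵢ ≥ 1 and Σᵢ dᵢ ≥ 5, one has the strict inequality c₃ < c₁³/18. In particular, no smooth complete intersection threefold with ample canonical class satisfies the inequality c₃ ≥ c₁³/18 satisfied by smooth threefolds fibered in minimal surfaces of general type over a curve. -/
open Finset

theorem chern_ineq_c3_lt_c1cube_div_eighteen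
    (n : ℕ) (hn : 0 < n) (d : Fin n → ℤ) (hd : ∀ i, 1 ≤ d i) (hs : 5 ≤ ∑ i, d i) :
    chern3 n (fun i => (d i : ℝ)) < chern1 n (fun i => (d i : ℝ)) ^ 3 / 18 := by
  have hs1 : (5 : ℝ) ≤ sPow n (fun i => (d i : ℝ)) 1 := by
    have : ((5 : ℤ) : ℝ) ≤ ((∑ i, d i : ℤ) : ℝ) := by exact_mod_cast hs
    simpa [sPow] using this
  have hs2 : (0 : ℝ) ≤ sPow n (fun i => (d i : ℝ)) 2 :=
    Finset.sum_nonneg fun i _ => by positivity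
  have hs3 : (0 : ℝ) ≤ sPow n (fun i => (d i : ℝ)) 3 :=
    Finset.sum_nonneg fun i _ => by
      have h1 : (1 : ℝ) ≤ (d i : ℝ) := by exact_mod_cast hd i
      positivity
  unfold chern1 chern3
  nlinarith [mul_nonneg hs2 (by linarith : (0 : ℝ) ≤ sPow n (fun i => (d i : ℝ)) 1 - 2),
    sq_nonneg (sPow n (fun i => (d i : ℝ)) 1 - 5), hs1, hs2, hs3]
end

section
/- For every positive integer n and integers d₁,…,dₙ with dᵢ ≥ 1 and Σᵢ dᵢ ≥ 5, one has c₃ - k₀·c₁³ - b₀·c₁·c₂ ≥ 0, where k₀ = -242/93 and b₀ = 515/93; i.e. every Chern-ratio point (c₁³/(c₁c₂), c₃/(c₁c₂)) lies on or below the line y = k₀x + b₀ through (1/16, 43/8) and (2, 1/3). -/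
open Finset

theorem below_line_p1_pinfty
    (n : ℕ) (hn : 0 < n) (d : Fin n → ℤ) (hd : ∀ i, 1 ≤ d i) (hs : 5 ≤ ∑ i, d i) :
    0 ≤ chern3 n (fun i => (d i : ℝ))
        - (-242/93) * chern1 n (fun i => (d i : ℝ)) ^ 3
        - (515/93) * (chern1 n (fun i => (d i : ℝ)) * chern2 n (fun i => (d i : ℝ))) := by
  set e : Fin n → ℝ := fun i => (d i : ℝ) with he
  have hd1 : ∀ i, (1 : ℝ) ≤ e i := fun i => by
    simp only [he]; exact_mod_cast hd i
  set s1 := sPow n e 1 with hs1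
  set s2 := sPow n e 2 with hs2
  set s3 := sPow n e 3 with hs3
  have h5 : (5 : ℝ) ≤ s1 := by
    have : ((5 : ℤ) : ℝ) ≤ ((∑ i, d i : ℤ) : ℝ) := by exact_mod_cast hs
    simpa [hs1, sPow, Int.cast_sum] using this
  have hle : ∀ i, e i ≤ s1 := by
    intro i
    have h : s1 = ∑ j, e j := by simp [hs1, sPow]
    rw [h]
    exact Finset.single_le_sum (fun j _ => le_trans zero_le_one (hd1 j)) (mem_univ i)
  have h21 : s1 ≤ s2 := by
    rw [hs1, hs2]
    exact Finset.sum_le_sum fun i _ => by nlinarith [hd1 i]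
  have h2sq : s2 ≤ s1 ^ 2 := by
    rw [hs2]
    calc ∑ i, e i ^ 2 ≤ ∑ i, e i * s1 := by
          refine Finset.sum_le_sum fun i _ => ?_
          have h0 : 0 ≤ e i := le_trans zero_le_one (hd1 i)
          nlinarith [hle i]
      _ = s1 ^ 2 := by rw [hs1]; simp [sPow, ← Finset.sum_mul]; ring
  have h312 : s3 ≤ s1 * s2 := by
    rw [hs3]
    calc ∑ i, e i ^ 3 ≤ ∑ i, e i ^ 2 * s1 := by
          refine Finset.sum_le_sum fun i _ => ?_
          have h0 : 0 ≤ e i := le_trans zero_le_one (hd1 i)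
          nlinarith [hle i]
      _ = s1 * s2 := by rw [hs1, hs2]; simp [sPow, ← Finset.sum_mul]; ring
  have key : (0:ℝ) ≤ 31 * (s1 * s2 - s3) + 180 * ((s1 - 5) * (s2 - s1))
      + 37 * (s1 ^ 2 - s2) + (s1 - 5) * (565 * s1 - 700) := by
    have t1 : (0:ℝ) ≤ s1 * s2 - s3 := by linarith
    have t2 : (0:ℝ) ≤ (s1 - 5) * (s2 - s1) :=
      mul_nonneg (by linarith) (by linarith)
    have t3 : (0:ℝ) ≤ s1 ^ 2 - s2 := by linarith
    have t4 : (0:ℝ) ≤ (s1 - 5) * (565 * s1 - 700) :=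
      mul_nonneg (by linarith) (by linarith)
    linarith
  simp only [chern1, chern2, chern3, ← hs1, ← hs2, ← hs3]
  nlinarith [key]
end
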